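/- arXiv:0805.1010 — 4 statements merged into one kernel-verified Lean document; each statement's English description precedes it below -/
import Mathlib

section
/- For fixed sample size n and as the number K of recolonizing demes tends to infinity, the rate (given in the paper's formula (35)) of a geographical collision grouping exactly k ≥ 2 specified lineages out of m lineages into r demes is asymptotically of order K^(r-k); in particular binary collision rates (k=2, r=1) multiplied by K converge to e·∫₀¹ y² Λ^g(dy), while rates of collisions involving at least 3 lineages are O(K^(-2)). -/
open MeasureTheory Filter

noncomputable def collisionRate (Λg : Measure ℝ) (e : ℝ) (N m k r : ℕ)
    (ks js : Fin r → ℕ) (K : ℕ) : ℝ :=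
  e * (∫ y in Set.Icc (0:ℝ) 1,
        (∑ s ∈ Finset.range (m - k + 1),
          (if r + s ≤ K then (1:ℝ) else 0) * ((m - k).choose s : ℝ)
            * y ^ (k + s) * (1 - y) ^ (m - k - s)
            * (Nat.descFactorial K (r + s) : ℝ) / (K : ℝ) ^ (k + s)) ∂Λg)
    * ∏ i, (Nat.descFactorial N (js i) : ℝ) / (N : ℝ) ^ (ks i)

lemma aux_integrable (Λg : Measure ℝ) [IsProbabilityMeasure Λg] (a b : ℕ) :
    IntegrableOn (fun y : ℝ => y ^ a * (1 - y) ^ b) (Set.Icc 0 1) Λg := by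
  apply ContinuousOn.integrableOn_compact isCompact_Icc
  fun_prop

lemma aux_tendsto_desc (n : ℕ) :
    Tendsto (fun K : ℕ => (Nat.descFactorial K n : ℝ) / (K : ℝ) ^ n) atTop (nhds 1) := by
  have h : Tendsto (fun K : ℕ => ∏ i ∈ Finset.range n, (1 - (i : ℝ) / K)) atTop
      (nhds (∏ i ∈ Finset.range n, (1:ℝ))) := by
    apply tendsto_finset_prod
    intro i _
    simpa using tendsto_const_nhds.sub (tendsto_const_div_atTop_nhds_zero_nat (i:ℝ))
  simp only [Finset.prod_const_one] at h
  apply h.congr'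
  filter_upwards [eventually_ge_atTop n, eventually_ge_atTop 1] with K hK hK1
  have hK0 : (K : ℝ) ≠ 0 := by positivity
  rw [Nat.descFactorial_eq_prod_range, Nat.cast_prod,
    show ((K:ℝ)^n) = ∏ _i ∈ Finset.range n, (K:ℝ) by
      rw [Finset.prod_const, Finset.card_range],
    ← Finset.prod_div_distrib]
  apply Finset.prod_congr rfl
  intro i hi
  have hiK : i ≤ K := le_trans (Finset.mem_range.mp hi).le hK
  rw [Nat.cast_sub hiK]
  field_simp

/-- Main convergence lemma: `K^(k-r) * collisionRate → e * L * P`. -/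
lemma aux_key (Λg : Measure ℝ) [IsProbabilityMeasure Λg] (e : ℝ) (N m k r : ℕ)
    (ks js : Fin r → ℕ) (hrk : r ≤ k) :
    Tendsto (fun K : ℕ => (K : ℝ) ^ (k - r) * collisionRate Λg e N m k r ks js K) atTop
      (nhds (e * (∑ s ∈ Finset.range (m - k + 1), ((m - k).choose s : ℝ) *
          ∫ y in Set.Icc (0:ℝ) 1, y ^ (k + s) * (1 - y) ^ (m - k - s) ∂Λg)
        * ∏ i, (Nat.descFactorial N (js i) : ℝ) / (N : ℝ) ^ (ks i))) := by
  set J : ℕ → ℝ := fun s => ∫ y in Set.Icc (0:ℝ) 1, y ^ (k + s) * (1 - y) ^ (m - k - s) ∂Λg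
    with hJ
  set P : ℝ := ∏ i, (Nat.descFactorial N (js i) : ℝ) / (N : ℝ) ^ (ks i) with hP
  have hrate : ∀ K : ℕ, collisionRate Λg e N m k r ks js K
      = e * (∑ s ∈ Finset.range (m - k + 1),
          ((if r + s ≤ K then (1:ℝ) else 0) * ((m - k).choose s : ℝ)
            * (Nat.descFactorial K (r + s) : ℝ) / (K : ℝ) ^ (k + s)) * J s) * P := by
    intro K
    unfold collisionRate
    congr 1
    congr 1
    rw [show (fun y : ℝ => ∑ s ∈ Finset.range (m - k + 1),
          (if r + s ≤ K then (1:ℝ) else 0) * ((m - k).choose s : ℝ)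
            * y ^ (k + s) * (1 - y) ^ (m - k - s)
            * (Nat.descFactorial K (r + s) : ℝ) / (K : ℝ) ^ (k + s))
        = (fun y : ℝ => ∑ s ∈ Finset.range (m - k + 1),
          ((if r + s ≤ K then (1:ℝ) else 0) * ((m - k).choose s : ℝ)
            * (Nat.descFactorial K (r + s) : ℝ) / (K : ℝ) ^ (k + s))
            * (y ^ (k + s) * (1 - y) ^ (m - k - s))) from by
      funext y; apply Finset.sum_congr rfl; intro s _; ring]
    rw [integral_finset_sum]
    · apply Finset.sum_congr rfl
      intro s _
      rw [integral_const_mul]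
    · intro s _
      exact ((aux_integrable Λg (k+s) (m-k-s)).const_mul _)
  have hcongr : ∀ᶠ K : ℕ in atTop,
      (K : ℝ) ^ (k - r) * collisionRate Λg e N m k r ks js K
      = e * (∑ s ∈ Finset.range (m - k + 1),
          ((m - k).choose s : ℝ) * ((Nat.descFactorial K (r + s) : ℝ) / (K : ℝ) ^ (r + s))
            * J s) * P := by
    filter_upwards [eventually_ge_atTop (r + (m - k)), eventually_ge_atTop 1] with K hK hK1
    rw [hrate K]
    have hK0 : (K : ℝ) ≠ 0 := by positivity
    rw [show e * (∑ s ∈ Finset.range (m - k + 1),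
          ((if r + s ≤ K then (1:ℝ) else 0) * ((m - k).choose s : ℝ)
            * (Nat.descFactorial K (r + s) : ℝ) / (K : ℝ) ^ (k + s)) * J s) * P
        = e * (∑ s ∈ Finset.range (m - k + 1),
          ((K:ℝ)^(k-r))⁻¹ * (((m - k).choose s : ℝ)
            * ((Nat.descFactorial K (r + s) : ℝ) / (K : ℝ) ^ (r + s)) * J s)) * P from ?_]
    · rw [← Finset.mul_sum]
      have hne : ((K:ℝ)^(k-r)) ≠ 0 := by positivity
      field_simp
    · congr 2
      apply Finset.sum_congr rfl
      intro s hs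
      have hsK : r + s ≤ K := by
        have := Finset.mem_range.mp hs; omega
      rw [if_pos hsK]
      have hpow : (K : ℝ) ^ (k + s) = (K:ℝ)^(k-r) * (K:ℝ)^(r+s) := by
        rw [← pow_add]; congr 1; omega
      rw [hpow]
      have h1 : ((K:ℝ)^(k-r)) ≠ 0 := by positivity
      have h2 : ((K:ℝ)^(r+s)) ≠ 0 := by positivity
      field_simp
  rw [tendsto_congr' hcongr]
  apply Tendsto.mul_const
  apply Tendsto.const_mul
  have : (∑ s ∈ Finset.range (m - k + 1), ((m - k).choose s : ℝ) * J s)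
      = ∑ s ∈ Finset.range (m - k + 1), ((m - k).choose s : ℝ) * (1:ℝ) * J s := by
    apply Finset.sum_congr rfl; intro s _; ring
  rw [this]
  apply tendsto_finset_sum
  intro s _
  exact (((aux_tendsto_desc (r + s)).const_mul _).mul_const _)

/-- As the number `K` of recolonizing demes tends to infinity, the rate
of a geographical collision grouping `k ≥ 2` specified lineages out of `m` into `r` demes
is of order `Θ(K^(r-k))`; in particular, the binary collision rates (`k = 2`, `r = 1`)
multiplied by `K` converge to `e ∫₀¹ y² Λᵍ(dy) · ∏ᵢ N!/((N-jᵢ)! N^{kᵢ})`, while the rates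
of collisions involving at least `3` lineages are `O(K⁻²)`. -/
theorem collision_rate_asymptotics
    (Λg : Measure ℝ) [IsProbabilityMeasure Λg] (hsupp : Λg (Set.Icc (0:ℝ) 1)ᶜ = 0)
    (e : ℝ) (he : 0 < e) (N : ℕ) (hN : 1 ≤ N)
    (m k r : ℕ) (hk : 2 ≤ k) (hkm : k ≤ m) (hr : 1 ≤ r)
    (ks js : Fin r → ℕ) (hks : ∀ i, 2 ≤ ks i) (hsum : ∑ i, ks i = k)
    (hjs : ∀ i, 1 ≤ js i ∧ js i ≤ ks i) (hjsN : ∀ i, js i ≤ N)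
    (hpos : 0 < ∫ y in Set.Icc (0:ℝ) 1, y ^ k * (1 - y) ^ (m - k) ∂Λg) :
    (∃ C₁ > (0:ℝ), ∃ C₂ > (0:ℝ), ∀ᶠ K : ℕ in atTop,
        C₁ * (K : ℝ) ^ ((r : ℤ) - (k : ℤ)) ≤ collisionRate Λg e N m k r ks js K ∧
        collisionRate Λg e N m k r ks js K ≤ C₂ * (K : ℝ) ^ ((r : ℤ) - (k : ℤ)))
    ∧ (k = 2 → r = 1 →
        Tendsto (fun K : ℕ => (K : ℝ) * collisionRate Λg e N m k r ks js K) atTop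
          (nhds (e * (∫ y in Set.Icc (0:ℝ) 1, y ^ 2 ∂Λg)
            * ∏ i, (Nat.descFactorial N (js i) : ℝ) / (N : ℝ) ^ (ks i))))
    ∧ (3 ≤ k → ∃ C : ℝ, ∀ᶠ K : ℕ in atTop,
        collisionRate Λg e N m k r ks js K ≤ C * (K : ℝ) ^ (-2 : ℤ)) := by
  have h2r : 2 * r ≤ k := by
    calc 2 * r = ∑ _i : Fin r, 2 := by simp [mul_comm]
    _ ≤ ∑ i, ks i := Finset.sum_le_sum (fun i _ => hks i)
    _ = k := hsum
  have hrk : r ≤ k := by omega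
  set J : ℕ → ℝ := fun s => ∫ y in Set.Icc (0:ℝ) 1, y ^ (k + s) * (1 - y) ^ (m - k - s) ∂Λg
    with hJdef
  set P : ℝ := ∏ i, (Nat.descFactorial N (js i) : ℝ) / (N : ℝ) ^ (ks i) with hPdef
  set L : ℝ := ∑ s ∈ Finset.range (m - k + 1), ((m - k).choose s : ℝ) * J s with hLdef
  have hkey : Tendsto (fun K : ℕ => (K : ℝ) ^ (k - r) * collisionRate Λg e N m k r ks js K)
      atTop (nhds (e * L * P)) := aux_key Λg e N m k r ks js hrk
  have hJnn : ∀ s, 0 ≤ J s := by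
    intro s
    apply setIntegral_nonneg measurableSet_Icc
    intro y hy
    exact mul_nonneg (pow_nonneg hy.1 _) (pow_nonneg (by linarith [hy.2]) _)
  have hJ0 : J 0 = ∫ y in Set.Icc (0:ℝ) 1, y ^ k * (1 - y) ^ (m - k) ∂Λg := by
    simp [hJdef]
  have hL : 0 < L := by
    rw [hLdef]
    apply Finset.sum_pos' (fun s _ => mul_nonneg (Nat.cast_nonneg _) (hJnn s))
    refine ⟨0, by simp, ?_⟩
    simpa [hJ0] using hpos
  have hP : 0 < P := by
    apply Finset.prod_pos
    intro i _
    apply div_pos _ (by positivity)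
    have : 0 < Nat.descFactorial N (js i) :=
      Nat.pos_of_ne_zero (fun h0 => by
        have := Nat.descFactorial_eq_zero_iff_lt.mp h0
        have := hjsN i; omega)
    exact_mod_cast this
  set c : ℝ := e * L * P with hcdef
  have hc : 0 < c := by rw [hcdef]; positivity
  have hzpow : ∀ K : ℕ, 1 ≤ K →
      (K : ℝ) ^ ((r : ℤ) - (k : ℤ)) = ((K : ℝ) ^ (k - r))⁻¹ := by
    intro K hK
    rw [show (r : ℤ) - (k : ℤ) = -((k - r : ℕ) : ℤ) by omega, zpow_neg, zpow_natCast]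
  have hrate_eq : ∀ K : ℕ, 1 ≤ K →
      collisionRate Λg e N m k r ks js K
      = ((K : ℝ) ^ (k - r) * collisionRate Λg e N m k r ks js K)
          * (K : ℝ) ^ ((r : ℤ) - (k : ℤ)) := by
    intro K hK
    rw [hzpow K hK]
    have hne : ((K : ℝ) ^ (k - r)) ≠ 0 := by positivity
    field_simp
  have hmain : ∀ᶠ K : ℕ in atTop,
      c / 2 * (K : ℝ) ^ ((r : ℤ) - (k : ℤ)) ≤ collisionRate Λg e N m k r ks js K ∧
      collisionRate Λg e N m k r ks js K ≤ 2 * c * (K : ℝ) ^ ((r : ℤ) - (k : ℤ)) := by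
    filter_upwards [hkey.eventually (eventually_gt_nhds (by linarith : c / 2 < c)),
      hkey.eventually (eventually_lt_nhds (by linarith : c < 2 * c)),
      eventually_ge_atTop 1] with K h1 h2 hK1
    have hznn : (0:ℝ) ≤ (K : ℝ) ^ ((r : ℤ) - (k : ℤ)) := by positivity
    constructor
    · rw [hrate_eq K hK1]
      exact mul_le_mul_of_nonneg_right h1.le hznn
    · rw [hrate_eq K hK1]
      exact mul_le_mul_of_nonneg_right h2.le hznn
  refine ⟨⟨c / 2, by positivity, 2 * c, by positivity, hmain⟩, ?_, ?_⟩
  · intro hk2 hr1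
    subst hk2; subst hr1
    have hLval : L = ∫ y in Set.Icc (0:ℝ) 1, y ^ 2 ∂Λg := by
      rw [hLdef]
      have : ∀ s ∈ Finset.range (m - 2 + 1), ((m - 2).choose s : ℝ) * J s
          = ∫ y in Set.Icc (0:ℝ) 1,
              ((m - 2).choose s : ℝ) * (y ^ (2 + s) * (1 - y) ^ (m - 2 - s)) ∂Λg := by
        intro s _
        rw [integral_const_mul]
      rw [Finset.sum_congr rfl this, ← integral_finset_sum _
        (fun s _ => (aux_integrable Λg (2 + s) (m - 2 - s)).const_mul _)]
      apply integral_congr_ae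
      filter_upwards with y
      have hb := add_pow y (1 - y) (m - 2)
      have hy1 : y + (1 - y) = 1 := by ring
      rw [hy1, one_pow] at hb
      calc (∑ s ∈ Finset.range (m - 2 + 1),
            ((m - 2).choose s : ℝ) * (y ^ (2 + s) * (1 - y) ^ (m - 2 - s)))
          = y ^ 2 * ∑ s ∈ Finset.range (m - 2 + 1),
              y ^ s * (1 - y) ^ (m - 2 - s) * ((m - 2).choose s : ℝ) := by
            rw [Finset.mul_sum]
            apply Finset.sum_congr rfl
            intro s _
            rw [pow_add]
            ring
        _ = y ^ 2 * 1 := by rw [← hb]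
        _ = y ^ 2 := by ring
    have hgoal : (e * (∫ y in Set.Icc (0:ℝ) 1, y ^ 2 ∂Λg) * P) = c := by
      rw [hcdef, hLval]
    rw [hgoal]
    exact hkey.congr (fun K => by norm_num)
  · intro hk3
    refine ⟨2 * c, ?_⟩
    filter_upwards [hmain, eventually_ge_atTop 1] with K hK hK1
    refine hK.2.trans ?_
    apply mul_le_mul_of_nonneg_left _ (by positivity)
    apply zpow_le_zpow_right₀ (by exact_mod_cast hK1)
    omega
end

section
/- Suppose a Markov jump process on a finite state space E has generator G^D = r_D Ψ + Γ + R_D where r_D → ∞, ⟨R_D⟩ → 0, and every state in a subset Π ⊆ E is absorbing for the dynamics generated by Ψ, while from every state outside Π the Ψ-jump rate is strictly positive. Then the first hitting time σ₁^D of Π by the process started at any ζ ∈ E converges to 0 in probability as D → ∞. -/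
/-!
Off `Π` the weight `w = 2 ^ φ` (extended by `0` on `Π`) is a Lyapunov function: every `Ψ`-jump
out of `η ∉ Π` enters `Π` or lowers the rank, so it at least halves `w`, giving
`Ψ w ≤ (Ψ η η / 2) w ≤ -(c / 2) w` off `Π`. The perturbation `Γ + R_D` changes the drift by at
most `‖Γ + R_D‖ ‖w‖ ≤ ‖Γ + R_D‖ ‖w‖ w(η)` there, as `w ≥ 1` off `Π`. Hence the stopped generator
satisfies `G̃_D w ≤ -λ_D w` with `λ_D → ∞`. As `G̃_D` has nonnegative off-diagonal entries,
`exp (s G̃_D)` is a nonnegative matrix with `exp (s G̃_D) w ≤ e^{-s λ_D} w`, so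
`P[σ₁ > s] = (exp (s G̃_D) 1_{Πᶜ}) ζ ≤ e^{-s λ_D} w ζ → 0`.
-/

open Filter Matrix Topology

namespace Matrix

theorem mulVec_mono_of_nonneg {m n R : Type*} [Fintype n] [Semiring R] [PartialOrder R]
    [IsOrderedRing R] {B : Matrix m n R} (hB : ∀ i j, 0 ≤ B i j) {v w : n → R}
    (h : v ≤ w) : B *ᵥ v ≤ B *ᵥ w :=
  fun i => Finset.sum_le_sum fun j _ => mul_le_mul_of_nonneg_left (h j) (hB i j)

variable {ι : Type*} [Fintype ι] [DecidableEq ι]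

section Exp

open scoped Norms.Operator

theorem hasSum_exp (B : Matrix ι ι ℝ) :
    HasSum (fun k => (k.factorial : ℝ)⁻¹ • B ^ k) (NormedSpace.exp B) :=
  NormedSpace.exp_series_hasSum_exp' B

theorem exp_smul_one (c : ℝ) :
    NormedSpace.exp (c • (1 : Matrix ι ι ℝ)) = Real.exp c • (1 : Matrix ι ι ℝ) := by
  rw [← Algebra.algebraMap_eq_smul_one, ← Algebra.algebraMap_eq_smul_one, Real.exp_eq_exp_ℝ,
    NormedSpace.algebraMap_exp_comm]
  rfl

end Exp

theorem exp_apply_nonneg_of_nonneg {B : Matrix ι ι ℝ} (hB : ∀ i j, 0 ≤ B i j) (i j : ι) :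
    0 ≤ NormedSpace.exp B i j :=
  (Pi.hasSum.mp (Pi.hasSum.mp (hasSum_exp B) i) j).nonneg fun k =>
    mul_nonneg (by positivity) (pow_apply_nonneg hB k i j)

theorem exp_mulVec_le_of_mulVec_le {B : Matrix ι ι ℝ} (hB : ∀ i j, 0 ≤ B i j) {w : ι → ℝ} {ρ : ℝ}
    (hρ : 0 ≤ ρ) (h : B *ᵥ w ≤ ρ • w) : NormedSpace.exp B *ᵥ w ≤ Real.exp ρ • w := by
  have hpow : ∀ k : ℕ, B ^ k *ᵥ w ≤ ρ ^ k • w := by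
    intro k
    induction k with
    | zero => simp
    | succ k ih =>
      calc B ^ (k + 1) *ᵥ w = B *ᵥ (B ^ k *ᵥ w) := by rw [pow_succ', mulVec_mulVec]
        _ ≤ B *ᵥ (ρ ^ k • w) := mulVec_mono_of_nonneg hB ih
        _ = ρ ^ k • (B *ᵥ w) := mulVec_smul _ _ _
        _ ≤ ρ ^ k • (ρ • w) := smul_le_smul_of_nonneg_left h (pow_nonneg hρ k)
        _ = ρ ^ (k + 1) • w := by rw [smul_smul, pow_succ]
  have hlhs : HasSum (fun k => (k.factorial : ℝ)⁻¹ • (B ^ k *ᵥ w)) (NormedSpace.exp B *ᵥ w) := by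
    simpa [Function.comp_def, mulVec.addMonoidHomLeft, smul_mulVec] using
      (hasSum_exp B).map (mulVec.addMonoidHomLeft w) (continuous_id.matrix_mulVec continuous_const)
  have hrhs : HasSum (fun k => (k.factorial : ℝ)⁻¹ • (ρ ^ k • w)) (Real.exp ρ • w) := by
    simpa [smul_smul, div_eq_inv_mul, Real.exp_eq_exp_ℝ] using
      (NormedSpace.expSeries_div_hasSum_exp ρ).smul_const w
  exact hasSum_le (fun k => smul_le_smul_of_nonneg_left (hpow k) (by positivity)) hlhs hrhs

theorem exp_smul_eq_smul_exp_add (G : Matrix ι ι ℝ) (t μ : ℝ) :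
    NormedSpace.exp (t • G) = Real.exp (-(t * μ)) • NormedSpace.exp (t • (G + μ • 1)) := by
  have hsplit : t • G = t • (G + μ • 1) + (-(t * μ)) • (1 : Matrix ι ι ℝ) := by
    rw [smul_add, smul_smul, add_assoc, ← add_smul, add_neg_cancel, zero_smul, add_zero]
  rw [hsplit, exp_add_of_commute _ _ ((Commute.one_right _).smul_right _), exp_smul_one,
    mul_smul_comm, mul_one]

theorem exists_nonneg_add_smul_one {G : Matrix ι ι ℝ} (hG : ∀ i j, i ≠ j → 0 ≤ G i j) (a : ℝ) :
    ∃ μ, a ≤ μ ∧ ∀ i j, 0 ≤ (G + μ • 1) i j := by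
  refine ⟨max a (∑ i, |G i i|), le_max_left _ _, fun i j => ?_⟩
  rcases eq_or_ne i j with rfl | hij
  · have hdiag : |G i i| ≤ ∑ k, |G k k| :=
      Finset.single_le_sum (f := fun k => |G k k|) (fun k _ => abs_nonneg _) (Finset.mem_univ i)
    simp only [add_apply, smul_apply, one_apply_eq, smul_eq_mul, mul_one]
    linarith [neg_abs_le (G i i), le_max_right a (∑ k, |G k k|)]
  · simpa [one_apply_ne hij] using hG i j hij

variable {G : Matrix ι ι ℝ} (hG : ∀ i j, i ≠ j → 0 ≤ G i j) {t : ℝ} (ht : 0 ≤ t)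
include hG ht

theorem exp_smul_apply_nonneg (i j : ι) : 0 ≤ NormedSpace.exp (t • G) i j := by
  obtain ⟨μ, -, hμ⟩ := exists_nonneg_add_smul_one hG 0
  rw [exp_smul_eq_smul_exp_add G t μ, smul_apply, smul_eq_mul]
  exact mul_nonneg (Real.exp_nonneg _)
    (exp_apply_nonneg_of_nonneg (fun i j => mul_nonneg ht (hμ i j)) i j)

theorem exp_smul_mulVec_le {w : ι → ℝ} {lam : ℝ} (h : G *ᵥ w ≤ -lam • w) :
    NormedSpace.exp (t • G) *ᵥ w ≤ Real.exp (-(t * lam)) • w := by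
  obtain ⟨μ, hlamμ, hμ⟩ := exists_nonneg_add_smul_one hG lam
  have hB : (t • (G + μ • 1)) *ᵥ w ≤ (t * (μ - lam)) • w := by
    rw [smul_mulVec, add_mulVec, smul_mulVec, one_mulVec, mul_smul]
    refine smul_le_smul_of_nonneg_left ?_ ht
    calc G *ᵥ w + μ • w ≤ -lam • w + μ • w := add_le_add_left h _
      _ = (μ - lam) • w := by rw [← add_smul, neg_add_eq_sub]
  have := exp_mulVec_le_of_mulVec_le (B := t • (G + μ • 1)) (fun i j => mul_nonneg ht (hμ i j))
    (mul_nonneg ht (sub_nonneg.mpr hlamμ)) hB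
  rw [exp_smul_eq_smul_exp_add G t μ, smul_mulVec]
  calc Real.exp (-(t * μ)) • (NormedSpace.exp (t • (G + μ • 1)) *ᵥ w)
      ≤ Real.exp (-(t * μ)) • (Real.exp (t * (μ - lam)) • w) :=
        smul_le_smul_of_nonneg_left this (Real.exp_nonneg _)
    _ = Real.exp (-(t * lam)) • w := by rw [smul_smul, ← Real.exp_add]; ring_nf

theorem exp_smul_mulVec_mem_Icc {u w : ι → ℝ} {lam : ℝ} (hu : 0 ≤ u) (huw : u ≤ w)
    (h : G *ᵥ w ≤ -lam • w) :
    NormedSpace.exp (t • G) *ᵥ u ∈ Set.Icc 0 (Real.exp (-(t * lam)) • w) := by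
  have hexp := exp_smul_apply_nonneg hG ht
  exact ⟨by simpa using mulVec_mono_of_nonneg hexp hu,
    (mulVec_mono_of_nonneg hexp huw).trans (exp_smul_mulVec_le hG ht h)⟩

end Matrix

theorem Finite.exists_pos_forall_le {ι : Type*} [Finite ι] {p : ι → Prop} {f : ι → ℝ}
    (h : ∀ i, p i → 0 < f i) : ∃ c > 0, ∀ i, p i → c ≤ f i := by
  have hev : ∀ᶠ c in 𝓝[>] (0 : ℝ), ∀ i, p i → c ≤ f i := by
    refine eventually_all.2 fun i => eventually_nhdsWithin_of_eventually_nhds ?_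
    by_cases hi : p i
    · exact (eventually_le_nhds (h i hi)).mono fun _ hc _ => hc
    · exact Eventually.of_forall fun _ hi' => absurd hi' hi
  obtain ⟨c, hc, hpos⟩ := (hev.and self_mem_nhdsWithin).exists
  exact ⟨c, hpos, hc⟩

section Absorption

variable {E : Type*} {S : Set E}

variable (S) in
def stopAt [DecidablePred (· ∈ S)] {R : Type*} [Zero R] (G : Matrix E E R) : Matrix E E R :=
  Matrix.of fun η η' => if η ∈ S then 0 else G η η'

variable (S) in
noncomputable def rankWeight (φ : E → ℕ) : E → ℝ :=
  Sᶜ.indicator fun η => 2 ^ φ η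

theorem stopAt_mulVec_apply [Fintype E] [DecidablePred (· ∈ S)] {R : Type*}
    [NonUnitalNonAssocSemiring R] (G : Matrix E E R) (v : E → R) (η : E) :
    (stopAt S G *ᵥ v) η = if η ∈ S then 0 else (G *ᵥ v) η := by
  by_cases hη : η ∈ S <;> simp [stopAt, mulVec, dotProduct, hη]

theorem stopAt_apply_nonneg_of_ne [DecidablePred (· ∈ S)] {G : Matrix E E ℝ}
    (hG : ∀ η η', η ≠ η' → 0 ≤ G η η') (η η' : E) (hne : η ≠ η') : 0 ≤ stopAt S G η η' := by
  simp only [stopAt, of_apply]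
  split_ifs
  exacts [le_rfl, hG η η' hne]

theorem sum_ite_mem_eq_mulVec_indicator [Fintype E] [DecidablePred (· ∈ S)] {R : Type*}
    [NonAssocSemiring R] (A : Matrix E E R) (ζ : E) :
    ∑ η, (if η ∈ S then 0 else A ζ η) = (A *ᵥ Sᶜ.indicator 1) ζ := by
  simp [mulVec, dotProduct, Set.indicator, apply_ite]

theorem rankWeight_of_mem {φ : E → ℕ} {η : E} (hη : η ∈ S) : rankWeight S φ η = 0 :=
  Set.indicator_of_notMem (Set.notMem_compl_iff.mpr hη) _

theorem rankWeight_of_notMem {φ : E → ℕ} {η : E} (hη : η ∉ S) : rankWeight S φ η = 2 ^ φ η :=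
  Set.indicator_of_mem hη _

theorem indicator_one_le_rankWeight (φ : E → ℕ) : Sᶜ.indicator 1 ≤ rankWeight S φ :=
  fun _ => Set.indicator_le_indicator (one_le_pow₀ (one_le_two : (1 : ℝ) ≤ 2))

theorem rankWeight_le_half_of_lt {φ : E → ℕ} {η η' : E} (hη : η ∉ S) (hlt : φ η' < φ η) :
    rankWeight S φ η' ≤ rankWeight S φ η / 2 := by
  rw [rankWeight_of_notMem hη]
  by_cases hη' : η' ∈ S
  · rw [rankWeight_of_mem hη']; positivity
  · have := pow_le_pow_right₀ (one_le_two : (1 : ℝ) ≤ 2) hlt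
    rw [rankWeight_of_notMem hη', pow_succ] at *
    linarith

theorem mulVec_rankWeight_le [Fintype E] {Ψ : Matrix E E ℝ} {φ : E → ℕ}
    (hΨoff : ∀ η η', η ≠ η' → 0 ≤ Ψ η η') (hΨrow : ∀ η, ∑ η', Ψ η η' = 0)
    (hrank : ∀ η ∉ S, ∀ η', η ≠ η' → Ψ η η' ≠ 0 → η' ∈ S ∨ φ η' < φ η)
    {η : E} (hη : η ∉ S) : (Ψ *ᵥ rankWeight S φ) η ≤ Ψ η η / 2 * rankWeight S φ η := by
  classical
  have hjump : ∀ η' ≠ η, Ψ η η' * (rankWeight S φ η' - rankWeight S φ η / 2) ≤ 0 := by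
    intro η' hη'
    rcases eq_or_ne (Ψ η η') 0 with h0 | hne
    · simp [h0]
    refine mul_nonpos_of_nonneg_of_nonpos (hΨoff η η' hη'.symm) (sub_nonpos.mpr ?_)
    rcases hrank η hη η' hη'.symm hne with hmem | hlt
    · rw [rankWeight_of_mem hmem, rankWeight_of_notMem hη]; positivity
    · exact rankWeight_le_half_of_lt hη hlt
  -- Subtracting `w η / 2` times the zero row sum makes every off-diagonal term nonpositive.
  calc (Ψ *ᵥ rankWeight S φ) η
      = ∑ η', Ψ η η' * (rankWeight S φ η' - rankWeight S φ η / 2) := by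
        simp only [mulVec, dotProduct, mul_sub, Finset.sum_sub_distrib, ← Finset.sum_mul, hΨrow η,
          zero_mul, sub_zero]
    _ ≤ Ψ η η * (rankWeight S φ η - rankWeight S φ η / 2) := by
        rw [← Finset.add_sum_erase _ _ (Finset.mem_univ η)]
        exact add_le_of_le_of_nonpos le_rfl
          (Finset.sum_nonpos fun η' hη' => hjump η' (Finset.ne_of_mem_erase hη'))
    _ = Ψ η η / 2 * rankWeight S φ η := by ring

section Drift

open scoped Matrix.Norms.Operator

variable [Fintype E] [DecidablePred (· ∈ S)] {Ψ : Matrix E E ℝ} {φ : E → ℕ}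
  (hΨoff : ∀ η η', η ≠ η' → 0 ≤ Ψ η η') (hΨrow : ∀ η, ∑ η', Ψ η η' = 0)
  (hrank : ∀ η ∉ S, ∀ η', η ≠ η' → Ψ η η' ≠ 0 → η' ∈ S ∨ φ η' < φ η)
include hΨoff hΨrow hrank

theorem stopAt_mulVec_rankWeight_le {c r : ℝ} (hc : ∀ η ∉ S, Ψ η η ≤ -c) (hr : 0 ≤ r)
    (M : Matrix E E ℝ) :
    stopAt S (r • Ψ + M) *ᵥ rankWeight S φ ≤
      -(r * (c / 2) - ‖M‖ * ‖rankWeight S φ‖) • rankWeight S φ := by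
  intro η
  rw [stopAt_mulVec_apply, Pi.smul_apply, smul_eq_mul]
  split_ifs with hη
  · rw [rankWeight_of_mem hη, mul_zero]
  have hw : 1 ≤ rankWeight S φ η := by
    rw [rankWeight_of_notMem hη]; exact one_le_pow₀ one_le_two
  have hΨ : r * (Ψ *ᵥ rankWeight S φ) η ≤ -(r * (c / 2)) * rankWeight S φ η :=
    calc r * (Ψ *ᵥ rankWeight S φ) η ≤ r * (Ψ η η / 2 * rankWeight S φ η) :=
          mul_le_mul_of_nonneg_left (mulVec_rankWeight_le hΨoff hΨrow hrank hη) hr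
      _ ≤ r * (-c / 2 * rankWeight S φ η) := by
          gcongr
          linarith [hc η hη]
      _ = -(r * (c / 2)) * rankWeight S φ η := by ring
  have hM : (M *ᵥ rankWeight S φ) η ≤ ‖M‖ * ‖rankWeight S φ‖ * rankWeight S φ η :=
    calc (M *ᵥ rankWeight S φ) η ≤ ‖M *ᵥ rankWeight S φ‖ :=
          (le_abs_self _).trans (norm_le_pi_norm (M *ᵥ rankWeight S φ) η)
      _ ≤ ‖M‖ * ‖rankWeight S φ‖ := linfty_opNorm_mulVec M _
      _ ≤ ‖M‖ * ‖rankWeight S φ‖ * rankWeight S φ η := le_mul_of_one_le_right (by positivity) hw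
  rw [add_mulVec, smul_mulVec, Pi.add_apply, Pi.smul_apply, smul_eq_mul]
  linarith

theorem exists_drift_rate_tendsto_atTop (hpos : ∀ η ∉ S, Ψ η η < 0) {r : ℕ → ℝ}
    (hr : Tendsto r atTop atTop) (Γ : Matrix E E ℝ) {R : ℕ → Matrix E E ℝ}
    (hR : ∀ η η', Tendsto (fun D => R D η η') atTop (𝓝 0)) :
    ∃ lam : ℕ → ℝ, Tendsto lam atTop atTop ∧ ∀ᶠ D in atTop,
      stopAt S (r D • Ψ + Γ + R D) *ᵥ rankWeight S φ ≤ -lam D • rankWeight S φ := by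
  obtain ⟨c, hc, hcΨ⟩ := Finite.exists_pos_forall_le (f := fun η => -Ψ η η) (p := (· ∉ S))
    fun η hη => neg_pos.mpr (hpos η hη)
  refine ⟨fun D => r D * (c / 2) - ‖Γ + R D‖ * ‖rankWeight S φ‖, ?_, ?_⟩
  · have hRlim : Tendsto R atTop (𝓝 0) := tendsto_pi_nhds.2 fun η => tendsto_pi_nhds.2 (hR η)
    have hnorm : Tendsto (fun D => ‖Γ + R D‖ * ‖rankWeight S φ‖) atTop
        (𝓝 (‖Γ + 0‖ * ‖rankWeight S φ‖)) :=
      ((tendsto_const_nhds.add hRlim).norm).mul_const _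
    exact (hr.atTop_mul_const (half_pos hc)).atTop_add hnorm.neg
  · filter_upwards [hr.eventually_ge_atTop 0] with D hD
    rw [add_assoc]
    exact stopAt_mulVec_rankWeight_le hΨoff hΨrow hrank (fun η hη => le_neg.mp (hcΨ η hη)) hD _

end Drift

end Absorption

theorem hitting_time_tendsto_zero_in_probability_general
    {E : Type*} [Fintype E] [DecidableEq E]
    (Pi : Set E) [DecidablePred (· ∈ Pi)] (φ : E → ℕ)
    (r : ℕ → ℝ) (hr : Tendsto r atTop atTop)
    (Ψ Γ : Matrix E E ℝ) (R : ℕ → Matrix E E ℝ)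
    (hR : ∀ η η', Tendsto (fun D => R D η η') atTop (nhds 0))
    (hΨoff : ∀ η η', η ≠ η' → 0 ≤ Ψ η η') (hΨrow : ∀ η, ∑ η', Ψ η η' = 0)
    (hpos : ∀ η ∉ Pi, Ψ η η < 0)
    (hrank : ∀ η ∉ Pi, ∀ η', η ≠ η' → Ψ η η' ≠ 0 → η' ∈ Pi ∨ φ η' < φ η)
    (hGoff : ∀ D η η', η ≠ η' → 0 ≤ (r D • Ψ + Γ + R D) η η') :
    ∀ ζ : E, ∀ s : ℝ, 0 < s →
      Tendsto
        (fun D =>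
          ∑ η', if η' ∈ Pi then (0:ℝ) else
            (NormedSpace.exp
              (s • (Matrix.of fun η η' =>
                if η ∈ Pi then (0:ℝ) else (r D • Ψ + Γ + R D) η η'))) ζ η')
        atTop (nhds 0) := by
  intro ζ s hs
  obtain ⟨lam, hlam, hdrift⟩ := exists_drift_rate_tendsto_atTop hΨoff hΨrow hrank hpos hr Γ hR
  have hbound : ∀ᶠ D in atTop,
      (∑ η', if η' ∈ Pi then (0:ℝ) else
        NormedSpace.exp (s • stopAt Pi (r D • Ψ + Γ + R D)) ζ η') ∈
        Set.Icc 0 (Real.exp (-(s * lam D)) * rankWeight Pi φ ζ) := by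
    filter_upwards [hdrift] with D hD
    rw [sum_ite_mem_eq_mulVec_indicator]
    have := exp_smul_mulVec_mem_Icc (stopAt_apply_nonneg_of_ne (hGoff D)) hs.le
      (Set.indicator_nonneg fun _ _ => zero_le_one) (indicator_one_le_rankWeight φ) hD
    exact ⟨this.1 ζ, this.2 ζ⟩
  have hlim : Tendsto (fun D => Real.exp (-(s * lam D)) * rankWeight Pi φ ζ) atTop (𝓝 0) := by
    simpa using (Real.tendsto_exp_atBot.comp
      (tendsto_neg_atTop_atBot.comp (hlam.const_mul_atTop hs))).mul_const (rankWeight Pi φ ζ)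
  exact tendsto_of_tendsto_of_tendsto_of_le_of_le' tendsto_const_nhds hlim
    (hbound.mono fun _ h => h.1) (hbound.mono fun _ h => h.2)

/-- Let `G^D = r_D • Ψ + Γ + R_D` be generators (Q-matrices) of Markov
jump processes on a finite state space `E`, where `r_D → ∞`, `R_D → 0`, every state of
`Π ⊆ E` is absorbing for the dynamics generated by `Ψ`, from every state outside `Π` the
`Ψ`-jump rate is strictly positive, and every `Ψ`-jump from outside `Π` either enters `Π`
or strictly decreases a rank function `φ` (so at most boundedly many `Ψ`-jumps can occur
before absorption in `Π`).  Then the first hitting time `σ₁^D` of `Π` by the process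
started at any `ζ ∈ E` converges to `0` in probability as `D → ∞`: writing `G̃^D` for the
generator modified so that all states of `Π` are absorbing, the probability
`P_ζ[σ₁^D > s] = Σ_{η ∉ Π} exp(s G̃^D)_{ζ,η}` tends to `0` for every `s > 0`. -/
theorem hitting_time_tendsto_zero_in_probability
    {E : Type*} [Fintype E] [DecidableEq E] [Nonempty E]
    (Pi : Set E) [DecidablePred (· ∈ Pi)] (φ : E → ℕ)
    (r : ℕ → ℝ) (hr : Tendsto r atTop atTop)
    (Ψ Γ : Matrix E E ℝ) (R : ℕ → Matrix E E ℝ)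
    (hR : ∀ η η', Tendsto (fun D => R D η η') atTop (nhds 0))
    (hΨoff : ∀ η η', η ≠ η' → 0 ≤ Ψ η η') (hΨrow : ∀ η, ∑ η', Ψ η η' = 0)
    (hΓoff : ∀ η η', η ≠ η' → 0 ≤ Γ η η') (hΓrow : ∀ η, ∑ η', Γ η η' = 0)
    (habs : ∀ η ∈ Pi, ∀ η', Ψ η η' = 0)
    (hpos : ∀ η ∉ Pi, Ψ η η < 0)
    (hrank : ∀ η ∉ Pi, ∀ η', η ≠ η' → Ψ η η' ≠ 0 → η' ∈ Pi ∨ φ η' < φ η)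
    (hGoff : ∀ D η η', η ≠ η' → 0 ≤ (r D • Ψ + Γ + R D) η η')
    (hGrow : ∀ D η, ∑ η', (r D • Ψ + Γ + R D) η η' = 0) :
    ∀ ζ : E, ∀ s : ℝ, 0 < s →
      Tendsto
        (fun D =>
          ∑ η', if η' ∈ Pi then (0:ℝ) else
            (NormedSpace.exp
              (s • (Matrix.of fun η η' =>
                if η ∈ Pi then (0:ℝ) else (r D • Ψ + Γ + R D) η η'))) ζ η')
        atTop (nhds 0) :=
  hitting_time_tendsto_zero_in_probability_general Pi φ r hr Ψ Γ R hR hΨoff hΨrow hpos hrank hGoff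
end

section
/- If for all γ ∈ Π_k the transition rates ρ(k; k₁,...,k_r) of the induced unstructured process satisfy ρ(k; k₁,...,k_r) = Σ_{i=1}^r ρ(k+1; k₁,...,k_i+1,...,k_r) + ρ(k+1; k₁,...,k_r, 1) for all k ≥ 2 and all k₁,...,k_r ≥ 1 with Σk_i = k and max k_i ≥ 2, then these rates are the restriction of a consistent exchangeable coalescent family (Ξ-coalescent) in the sense of Schweinsberg's consistency criterion. -/
open scoped Classical

/-- The projection of a partition (setoid) of `{1,…,n+1}` to a partition of `{1,…,n}`,
obtained by deleting the last element. -/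
def projS {n : ℕ} (s : Setoid (Fin (n + 1))) : Setoid (Fin n) :=
  Setoid.comap Fin.castSucc s

/-- Given partitions `ζ ≤ η` of `{1,…,n}` (`η` coarser than `ζ`), the merger profile
of the transition `ζ → η`: the multiset recording, for each block of `η`, the number of
blocks of `ζ` merged to form it. -/
noncomputable def mergeProfile {n : ℕ} (ζ η : Setoid (Fin n)) : Multiset ℕ :=
  ((Finset.univ.image fun x : Fin n => Quotient.mk η x).val).map
    fun C => Nat.card {c : Quotient ζ // Quotient.mk η (Quotient.out c) = C}

/-- The transition rate, among `P_n`, of the merger `ζ → η`, for a rate array `ρ`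
indexed by the number of blocks of `ζ` and the merger profile. -/
noncomputable def mergeRate (ρ : ℕ → Multiset ℕ → NNReal) {n : ℕ}
    (ζ η : Setoid (Fin n)) : NNReal :=
  if ζ ≤ η ∧ ζ ≠ η then ρ (Nat.card (Quotient ζ)) (mergeProfile ζ η) else 0

/-!
A lift of a partition `η` of `{1,…,n}` to `{1,…,n+1}` is determined by what happens to the new
element: it forms a singleton block or joins one block of `η`. Fix a lift `ζ'` of `ζ < η`. If the
new element lies in a block `b` of `ζ'`, the only lift of `η` above `ζ'` puts it into the block
of `η` containing `b`, and that transition merges exactly as `ζ → η` does. If it is a singleton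
of `ζ'`, it may stay a singleton (profile `(k₁,…,k_r,1)`) or join the `i`-th block of `η`
(profile `(k₁,…,k_i+1,…,k_r)`), and the sum of these rates is the right-hand side of the
consistency recursion. Writing the finer partition as the kernel of a surjection `f` and the
coarser one as the kernel of `h ∘ f` identifies merger profiles with the fiber sizes of `h`.
When `ζ ≰ η`, no lift of `η` lies above `ζ'`, since restriction is monotone.
-/

open Function

section FiberProfile

variable {β γ : Type*} [Fintype γ]

noncomputable def fiberProfile (h : β → γ) : Multiset ℕ :=
  Finset.univ.val.map fun c => Nat.card {b // h b = c}

lemma card_fiber_option [Fintype β] {δ : Type*} (g : Option β → δ) (d : δ) :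
    Nat.card {o // g o = d} = Nat.card {b // g (some b) = d} + if g none = d then 1 else 0 := by
  simp only [Nat.card_eq_fintype_card, Fintype.card_subtype, Finset.card_filter,
    Fintype.sum_option]
  exact add_comm _ _

lemma fiberProfile_optionMap [Fintype β] (h : β → γ) :
    fiberProfile (Option.map h) = 1 ::ₘ fiberProfile h := by
  have huniv : (Finset.univ.val : Multiset (Option γ)) = none ::ₘ Finset.univ.val.map some := rfl
  simp only [fiberProfile, huniv, Multiset.map_cons, Multiset.map_map, card_fiber_option]
  simp

lemma fiberProfile_optionElim [Fintype β] (h : β → γ) (c : γ) :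
    fiberProfile (fun o : Option β => o.elim c h)
      = (Nat.card {b // h b = c} + 1) ::ₘ (fiberProfile h).erase (Nat.card {b // h b = c}) := by
  have huniv : (Finset.univ.val : Multiset γ) = c ::ₘ Finset.univ.val.erase c :=
    (Multiset.cons_erase (Finset.mem_univ c)).symm
  simp only [fiberProfile, card_fiber_option, Option.elim]
  rw [huniv, Multiset.map_cons, Multiset.map_cons, Multiset.erase_cons_head, if_pos rfl]
  congr 1
  refine Multiset.map_congr rfl fun d hd => ?_
  rw [if_neg (Finset.univ.nodup.mem_erase_iff.mp hd).1.symm, add_zero]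

lemma sum_fiberProfile [Fintype β] (h : β → γ) : (fiberProfile h).sum = Nat.card β := by
  rw [fiberProfile, Finset.sum_map_val]
  simp only [Nat.card_eq_fintype_card]
  exact Fintype.card_sigma.symm.trans (Fintype.card_congr (Equiv.sigmaFiberEquiv h))

lemma one_le_of_mem_fiberProfile [Finite β] {h : β → γ} (hh : Surjective h) :
    ∀ x ∈ fiberProfile h, 1 ≤ x := by
  simp only [fiberProfile, Multiset.mem_map]
  rintro _ ⟨c, -, rfl⟩
  have : Nonempty {b // h b = c} := nonempty_subtype.mpr (hh c)
  exact Nat.card_pos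

lemma exists_two_le_mem_fiberProfile [Finite β] {h : β → γ} (hh : ¬ Injective h) :
    ∃ x ∈ fiberProfile h, 2 ≤ x := by
  obtain ⟨a, b, hab, hne⟩ : ∃ a b, h a = h b ∧ a ≠ b := by
    simpa [Injective] using hh
  refine ⟨_, Multiset.mem_map_of_mem _ (Finset.mem_univ (h a)), ?_⟩
  have : Nontrivial {x // h x = h a} :=
    ⟨⟨a, rfl⟩, ⟨b, hab.symm⟩, fun e => hne (congrArg Subtype.val e)⟩
  exact Finite.one_lt_card_iff_nontrivial.mpr this

end FiberProfile

section Kernel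

variable {m : ℕ} {β γ : Type*}

lemma mergeProfile_ker_comp [Fintype γ] {f : Fin m → β} (hf : Surjective f) {h : β → γ}
    (hh : Surjective h) :
    mergeProfile (Setoid.ker f) (Setoid.ker (h ∘ f)) = fiberProfile h := by
  let eβ := Setoid.quotientKerEquivOfSurjective f hf
  let eγ := Setoid.quotientKerEquivOfSurjective (h ∘ f) (hh.comp hf)
  rw [mergeProfile, Finset.image_univ_of_surjective Quotient.mk_surjective, fiberProfile,
    ← Multiset.map_univ_val_equiv eγ.symm, Multiset.map_map]
  refine Multiset.map_congr rfl fun c _ => Nat.card_congr (Equiv.subtypeEquiv eβ fun q => ?_)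
  rw [Equiv.eq_symm_apply]
  obtain ⟨a, rfl⟩ := Quotient.mk_surjective q
  change h (f (Quotient.out ⟦a⟧)) = c ↔ h (f a) = c
  rw [Setoid.ker_apply_mk_out (f := f)]

lemma card_quotient_ker {α : Type*} {f : α → β} (hf : Surjective f) :
    Nat.card (Quotient (Setoid.ker f)) = Nat.card β :=
  Nat.card_congr (Setoid.quotientKerEquivOfSurjective f hf)

end Kernel

lemma Fin.snoc_surjective {n : ℕ} {β : Type*} {f : Fin n → β} (hf : Surjective f) (b : β) :
    Surjective (Fin.snoc f b : Fin (n + 1) → β) := fun y =>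
  let ⟨i, hi⟩ := hf y
  ⟨i.castSucc, by rw [Fin.snoc_castSucc, hi]⟩

lemma Fin.snoc_some_none_surjective {n : ℕ} {β : Type*} {f : Fin n → β} (hf : Surjective f) :
    Surjective (Fin.snoc (some ∘ f) none : Fin (n + 1) → Option β)
  | none => ⟨Fin.last n, Fin.snoc_last _ _⟩
  | some y =>
    let ⟨i, hi⟩ := hf y
    ⟨i.castSucc, by rw [Fin.snoc_castSucc, Function.comp_apply, hi]⟩

lemma Option.map_surjective {β γ : Type*} {f : β → γ} (hf : Surjective f) :
    Surjective (Option.map f)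
  | none => ⟨none, rfl⟩
  | some y =>
    let ⟨x, hx⟩ := hf y
    ⟨some x, by rw [Option.map_some, hx]⟩

section MapOfLE

variable {α : Type*} {ζ η : Setoid α} (h : ζ ≤ η)

def Quotient.mapOfLE : Quotient ζ → Quotient η :=
  Quotient.map' id fun _ _ hab => h hab

lemma Quotient.mapOfLE_comp_mk : Quotient.mapOfLE h ∘ Quotient.mk ζ = Quotient.mk η := rfl

lemma Quotient.mapOfLE_surjective : Surjective (Quotient.mapOfLE h) :=
  fun q => q.inductionOn fun a => ⟨⟦a⟧, rfl⟩

lemma Quotient.not_injective_mapOfLE (hne : ζ ≠ η) : ¬ Injective (Quotient.mapOfLE h) :=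
  fun hinj => hne <| le_antisymm h fun a b hab =>
    Quotient.exact <| hinj
      (show Quotient.mapOfLE h ⟦a⟧ = Quotient.mapOfLE h ⟦b⟧ from Quotient.sound hab)

end MapOfLE

section Lift

variable {n : ℕ}

lemma projS_mono {s t : Setoid (Fin (n + 1))} (h : s ≤ t) : projS s ≤ projS t :=
  fun _ _ hab => h hab

lemma eq_of_projS_eq_of_rel_last {s t : Setoid (Fin (n + 1))} (hp : projS s = projS t)
    (hl : ∀ i : Fin n, s i.castSucc (Fin.last n) ↔ t i.castSucc (Fin.last n)) : s = t := by
  have hc : ∀ i j : Fin n, s i.castSucc j.castSucc ↔ t i.castSucc j.castSucc :=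
    Setoid.ext_iff.mp hp
  refine Setoid.ext fun x y => ?_
  induction x using Fin.lastCases <;> induction y using Fin.lastCases
  · exact iff_of_true (s.refl _) (t.refl _)
  · exact ⟨fun h => t.symm ((hl _).mp (s.symm h)), fun h => s.symm ((hl _).mpr (t.symm h))⟩
  · exact hl _
  · exact hc _ _

/-- `d = none`: the element `n + 1` is a singleton; `d = some C`: it joins the block `C`. -/
def liftPartition (η : Setoid (Fin n)) (d : Option (Quotient η)) : Setoid (Fin (n + 1)) :=
  Setoid.ker (Fin.snoc (some ∘ Quotient.mk η) d : Fin (n + 1) → Option (Quotient η))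

variable (η : Setoid (Fin n))

@[simp] lemma projS_liftPartition (d : Option (Quotient η)) : projS (liftPartition η d) = η :=
  Setoid.ext fun i j => by
    rw [projS, Setoid.comap_rel, liftPartition, Setoid.ker_def]
    simp [Quotient.eq]

lemma liftPartition_castSucc_last (d : Option (Quotient η)) (i : Fin n) :
    liftPartition η d i.castSucc (Fin.last n) ↔ some ⟦i⟧ = d := by
  rw [liftPartition, Setoid.ker_def]
  simp

lemma liftPartition_injective : Injective (liftPartition η) := fun d₁ d₂ h =>
  Option.ext fun c => by
    obtain ⟨i, rfl⟩ := Quotient.mk_surjective c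
    rw [eq_comm, ← liftPartition_castSucc_last, h, liftPartition_castSucc_last, eq_comm]

lemma exists_liftPartition_projS_eq (s : Setoid (Fin (n + 1))) :
    ∃ d, liftPartition (projS s) d = s := by
  by_cases hl : ∃ j : Fin n, s j.castSucc (Fin.last n)
  · obtain ⟨j, hj⟩ := hl
    refine ⟨some ⟦j⟧, eq_of_projS_eq_of_rel_last (projS_liftPartition _ _) fun i => ?_⟩
    rw [liftPartition_castSucc_last, Option.some_inj, Quotient.eq]
    exact ⟨fun hij => s.trans hij hj, fun hi => s.trans hi (s.symm hj)⟩
  · refine ⟨none, eq_of_projS_eq_of_rel_last (projS_liftPartition _ _) fun i => ?_⟩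
    rw [liftPartition_castSucc_last]
    exact iff_of_false (Option.some_ne_none _) fun hi => hl ⟨i, hi⟩

lemma range_liftPartition : Set.range (liftPartition η) = {s | projS s = η} := by
  ext s
  refine ⟨?_, fun hs => ?_⟩
  · rintro ⟨d, rfl⟩
    exact projS_liftPartition η d
  · rw [← hs]
    exact exists_liftPartition_projS_eq s

lemma finsum_projS_eq_sum {M : Type*} [AddCommMonoid M] (f : Setoid (Fin (n + 1)) → M) :
    ∑ᶠ (s : Setoid (Fin (n + 1))) (_ : projS s = η), f s = ∑ d, f (liftPartition η d) := by
  rw [← finsum_eq_sum_of_fintype, ← finsum_mem_range (liftPartition_injective η),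
    range_liftPartition]
  rfl

lemma liftPartition_ne_liftPartition {ζ : Setoid (Fin n)} (hne : ζ ≠ η)
    (c : Option (Quotient ζ)) (d : Option (Quotient η)) :
    liftPartition ζ c ≠ liftPartition η d := fun e =>
  hne (by rw [← projS_liftPartition ζ c, e, projS_liftPartition])

lemma liftPartition_some (c : Quotient η) :
    liftPartition η (some c) = Setoid.ker (Fin.snoc (Quotient.mk η) c : Fin (n + 1) → _) := by
  rw [liftPartition, ← Fin.comp_snoc]
  exact Setoid.ext fun _ _ => Option.some_inj

end Lift

section Rates

variable (ρ : ℕ → Multiset ℕ → NNReal) {m : ℕ}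

lemma mergeRate_of_not_le {ζ η : Setoid (Fin m)} (h : ¬ ζ ≤ η) : mergeRate ρ ζ η = 0 :=
  if_neg fun h' => h h'.1

lemma mergeRate_eq_of_eq_ker {β γ : Type*} [Fintype β] [Fintype γ] {s t : Setoid (Fin m)}
    (hst : s ≠ t) {f : Fin m → β} (hf : Surjective f) {h : β → γ} (hh : Surjective h)
    (hs : s = Setoid.ker f) (ht : t = Setoid.ker (h ∘ f)) :
    mergeRate ρ s t = ρ (Nat.card β) (fiberProfile h) := by
  subst hs ht
  rw [mergeRate, if_pos ⟨fun _ _ hab => congrArg h hab, hst⟩, card_quotient_ker hf,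
    mergeProfile_ker_comp hf hh]

lemma mergeRate_eq_fiberProfile {ζ η : Setoid (Fin m)} (hlt : ζ < η) :
    mergeRate ρ ζ η = ρ (Nat.card (Quotient ζ)) (fiberProfile (Quotient.mapOfLE hlt.le)) :=
  mergeRate_eq_of_eq_ker ρ hlt.ne Quotient.mk_surjective (Quotient.mapOfLE_surjective hlt.le)
    (Setoid.ker_mk_eq ζ).symm (Setoid.ker_mk_eq η).symm

variable {n : ℕ} {ζ η : Setoid (Fin n)}

lemma eq_some_of_liftPartition_some_le (hle : ζ ≤ η) {b : Quotient ζ}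
    {d : Option (Quotient η)} (h : liftPartition ζ (some b) ≤ liftPartition η d) :
    d = some (Quotient.mapOfLE hle b) := by
  obtain ⟨i, rfl⟩ := Quotient.mk_surjective b
  exact ((liftPartition_castSucc_last η d i).mp
    (h ((liftPartition_castSucc_last ζ _ i).mpr rfl))).symm

lemma sum_mergeRate_liftPartition_some (hlt : ζ < η) (b : Quotient ζ) :
    ∑ d, mergeRate ρ (liftPartition ζ (some b)) (liftPartition η d) = mergeRate ρ ζ η := by
  rw [Finset.sum_eq_single_of_mem (some (Quotient.mapOfLE hlt.le b)) (Finset.mem_univ _)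
      fun d _ hd => mergeRate_of_not_le ρ fun h => hd (eq_some_of_liftPartition_some_le hlt.le h),
    mergeRate_eq_fiberProfile ρ hlt]
  refine mergeRate_eq_of_eq_ker ρ (liftPartition_ne_liftPartition η hlt.ne _ _)
    (Fin.snoc_surjective Quotient.mk_surjective b) (Quotient.mapOfLE_surjective hlt.le)
    (liftPartition_some ζ b) ?_
  rw [liftPartition_some, Fin.comp_snoc, Quotient.mapOfLE_comp_mk]

lemma mergeRate_liftPartition_none_none (hlt : ζ < η) :
    mergeRate ρ (liftPartition ζ none) (liftPartition η none)
      = ρ (Nat.card (Quotient ζ) + 1) (1 ::ₘ fiberProfile (Quotient.mapOfLE hlt.le)) := by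
  rw [mergeRate_eq_of_eq_ker ρ (liftPartition_ne_liftPartition η hlt.ne _ _)
    (Fin.snoc_some_none_surjective Quotient.mk_surjective)
    (Option.map_surjective (Quotient.mapOfLE_surjective hlt.le)) rfl ?_,
    fiberProfile_optionMap, Finite.card_option]
  rw [liftPartition, Fin.comp_snoc, ← Function.comp_assoc, Option.map_comp_some]
  rfl

lemma mergeRate_liftPartition_none_some (hlt : ζ < η) (c : Quotient η) :
    mergeRate ρ (liftPartition ζ none) (liftPartition η (some c))
      = ρ (Nat.card (Quotient ζ) + 1)
          ((Nat.card {b // Quotient.mapOfLE hlt.le b = c} + 1) ::ₘ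
            (fiberProfile (Quotient.mapOfLE hlt.le)).erase
              (Nat.card {b // Quotient.mapOfLE hlt.le b = c})) := by
  rw [mergeRate_eq_of_eq_ker ρ (liftPartition_ne_liftPartition η hlt.ne _ _)
    (Fin.snoc_some_none_surjective Quotient.mk_surjective)
    (h := fun o => o.elim c (Quotient.mapOfLE hlt.le))
    (Surjective.of_comp (g := some) (Quotient.mapOfLE_surjective hlt.le)) rfl ?_,
    fiberProfile_optionElim, Finite.card_option]
  rw [liftPartition_some, Fin.comp_snoc]
  rfl

end Rates

def SatisfiesConsistencyRecursion (ρ : ℕ → Multiset ℕ → NNReal) : Prop :=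
  ∀ (k : ℕ), 2 ≤ k → ∀ m : Multiset ℕ,
    (∀ x ∈ m, 1 ≤ x) → m.sum = k → (∃ x ∈ m, 2 ≤ x) →
    ρ k m = (m.map fun ki => ρ (k + 1) ((ki + 1) ::ₘ m.erase ki)).sum + ρ (k + 1) (1 ::ₘ m)

lemma sum_mergeRate_liftPartition_none {ρ : ℕ → Multiset ℕ → NNReal}
    (hrec : SatisfiesConsistencyRecursion ρ) {n : ℕ} {ζ η : Setoid (Fin n)} (hlt : ζ < η) :
    ∑ d, mergeRate ρ (liftPartition ζ none) (liftPartition η d) = mergeRate ρ ζ η := by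
  have hsum := sum_fiberProfile (Quotient.mapOfLE hlt.le)
  obtain ⟨x, hx, hx2⟩ :=
    exists_two_le_mem_fiberProfile (Quotient.not_injective_mapOfLE hlt.le hlt.ne)
  have hk : 2 ≤ Nat.card (Quotient ζ) := hsum ▸ hx2.trans (Multiset.le_sum_of_mem hx)
  rw [mergeRate_eq_fiberProfile ρ hlt,
    hrec _ hk _ (one_le_of_mem_fiberProfile (Quotient.mapOfLE_surjective hlt.le)) hsum
      ⟨x, hx, hx2⟩,
    Fintype.sum_option, mergeRate_liftPartition_none_none ρ hlt, add_comm,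
    Finset.sum_congr rfl fun c _ => mergeRate_liftPartition_none_some ρ hlt c]
  conv_rhs => rw [fiberProfile, Multiset.map_map]
  rfl

/-- **Schweinsberg's consistency criterion.** If the nonnegative rates
`ρ(k; k₁,…,k_r)` (invariant under permutation of `k₁,…,k_r`, encoded as a multiset)
satisfy the consistency recursion
`ρ(k; k₁,…,k_r) = Σ_{i=1}^r ρ(k+1; k₁,…,k_i+1,…,k_r) + ρ(k+1; k₁,…,k_r, 1)`
for all `k ≥ 2` and all `k₁,…,k_r ≥ 1` summing to `k` with `max k_i ≥ 2`, then the
induced Markov chains on the partitions of `{1,…,n}` (where a transition merges `k₁`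
blocks into one, `k₂` into another, etc., at rate `ρ`) form a projective family: the
rate of any transition `ζ → η` (`η ≠ ζ`) equals the total rate, started from any lift
`ζ'` of `ζ` on `{1,…,n+1}`, of the transitions `ζ' → η'` whose restriction is `η`. -/
theorem consistency_recursion_implies_projective_rates
    (ρ : ℕ → Multiset ℕ → NNReal)
    (hrec : ∀ (k : ℕ), 2 ≤ k → ∀ m : Multiset ℕ,
      (∀ x ∈ m, 1 ≤ x) → m.sum = k → (∃ x ∈ m, 2 ≤ x) →
      ρ k m = (m.map fun ki => ρ (k + 1) ((ki + 1) ::ₘ m.erase ki)).sum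
        + ρ (k + 1) (1 ::ₘ m)) :
    ∀ (n : ℕ) (ζ η : Setoid (Fin n)) (ζ' : Setoid (Fin (n + 1))),
      ζ ≠ η → projS ζ' = ζ →
      mergeRate ρ ζ η = ∑ᶠ (η' : Setoid (Fin (n + 1))) (_ : projS η' = η),
        mergeRate ρ ζ' η' := by
  intro n ζ η ζ' hne hproj
  obtain ⟨c, rfl⟩ : ∃ c, liftPartition ζ c = ζ' :=
    hproj ▸ exists_liftPartition_projS_eq ζ'
  rw [finsum_projS_eq_sum]
  by_cases hle : ζ ≤ η
  · have hlt : ζ < η := lt_of_le_of_ne hle hne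
    cases c with
    | none => exact (sum_mergeRate_liftPartition_none hrec hlt).symm
    | some b => exact (sum_mergeRate_liftPartition_some ρ hlt b).symm
  · refine (mergeRate_of_not_le ρ hle).trans (Finset.sum_eq_zero fun d _ => ?_).symm
    exact mergeRate_of_not_le ρ fun h => hle (by simpa using projS_mono h)
end

section
/- Let ξ be a Markov jump process on the finite sets P_k^s (for all k ≥ 1) whose transitions only merge blocks within a component and move blocks to empty components. Then condition (i): for all ζ, η ∈ P_k^s and ζ̃ ∈ P_{k+1}^s with ζ ≺ ζ̃, q(η|ζ) = Σ_{η̃: η ≺ η̃} q(η̃|ζ̃), is equivalent to (ii): for every ζ' ∈ P_{k+1}^s projecting to ζ, the restriction to P_k^s of the process started at ζ' has the same law as the process started at ζ. -/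
/-!
Write `P` for the 0-1 matrix of `π`. Condition (i) is the entrywise form of `Q' P = P Q` at the
entries `(ζ', η)` with `η ≠ π ζ'`; the remaining entry `(ζ', π ζ')` then follows because both
`Q' P` and `P Q` have zero row sums. The intertwining `Q' P = P Q` passes term by term to the
exponential series, and conversely differentiating `exp (t Q') P = P exp (t Q)` at `t = 0⁺`
recovers it.
-/

namespace Matrix

variable {l m n : Type*}

def graphMatrix (R : Type*) [Zero R] [One R] [DecidableEq n] (π : m → n) : Matrix m n R :=
  of fun a b => if π a = b then 1 else 0

section graphMatrix

variable {R : Type*} [NonAssocSemiring R] [DecidableEq n] (π : m → n)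

theorem mul_graphMatrix_apply [Fintype m] (A : Matrix l m R) (i : l) (b : n) :
    (A * graphMatrix R π) i b = ∑ j, if π j = b then A i j else 0 := by
  simp only [mul_apply, graphMatrix, of_apply, mul_ite, mul_one, mul_zero]

theorem graphMatrix_mul_apply [Fintype n] {o : Type*} (B : Matrix n o R) (a : m) (c : o) :
    (graphMatrix R π * B) a c = B (π a) c := by
  simp only [mul_apply, graphMatrix, of_apply, ite_mul, one_mul, zero_mul,
    Finset.sum_ite_eq, Finset.mem_univ, if_true]

theorem sum_mul_graphMatrix_apply [Fintype m] [Fintype n] (A : Matrix l m R) (i : l) :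
    ∑ b, (A * graphMatrix R π) i b = ∑ j, A i j := by
  simp only [mul_graphMatrix_apply]
  rw [Finset.sum_comm]
  simp only [Finset.sum_ite_eq, Finset.mem_univ, if_true]

end graphMatrix

theorem ext_of_sum_row_eq_of_apply_eq {R : Type*} [AddCommGroup R] [Fintype n] [DecidableEq n]
    {M N : Matrix m n R} (f : m → n) (hrow : ∀ i, ∑ j, M i j = ∑ j, N i j)
    (hoff : ∀ i j, j ≠ f i → M i j = N i j) : M = N := by
  ext i j
  by_cases hj : j = f i
  · subst hj
    have hrest : ∑ k ∈ Finset.univ.erase (f i), M i k = ∑ k ∈ Finset.univ.erase (f i), N i k :=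
      Finset.sum_congr rfl fun k hk => hoff i k (Finset.ne_of_mem_erase hk)
    have hsum := hrow i
    rw [← Finset.add_sum_erase _ _ (Finset.mem_univ (f i)),
      ← Finset.add_sum_erase _ _ (Finset.mem_univ (f i)), hrest] at hsum
    exact add_right_cancel hsum
  · exact hoff i j hj

theorem forall_ne_apply_eq_sum_iff_mul_graphMatrix_eq {R : Type*} [Ring R] [Fintype m]
    [Fintype n] [DecidableEq n] (π : m → n) {Q' : Matrix m m R} {Q : Matrix n n R}
    (hQ'row : ∀ a, ∑ b, Q' a b = 0) (hQrow : ∀ a, ∑ b, Q a b = 0) :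
    (∀ (ζ' : m) (η : n), η ≠ π ζ' → Q (π ζ') η = ∑ η', if π η' = η then Q' ζ' η' else 0) ↔
      Q' * graphMatrix R π = graphMatrix R π * Q := by
  simp only [← mul_graphMatrix_apply, ← graphMatrix_mul_apply π Q]
  refine ⟨fun h => ext_of_sum_row_eq_of_apply_eq π (fun a => ?_) fun a b hb => (h a b hb).symm,
    fun h a b _ => by rw [h]⟩
  rw [sum_mul_graphMatrix_apply, hQ'row]
  simp only [graphMatrix_mul_apply, hQrow]

section Exponential

variable [Fintype m] [Fintype n] [DecidableEq m] [DecidableEq n]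

theorem pow_mul_eq_mul_pow_of_mul_eq {R : Type*} [Semiring R] {A : Matrix m m R}
    {B : Matrix n n R} {P : Matrix m n R} (h : A * P = P * B) (k : ℕ) :
    A ^ k * P = P * B ^ k := by
  induction k with
  | zero => simp
  | succ k ih => rw [pow_succ, pow_succ, Matrix.mul_assoc, h, ← Matrix.mul_assoc, ih,
      Matrix.mul_assoc]

attribute [local instance] Matrix.linftyOpNormedRing Matrix.linftyOpNormedAlgebra

theorem exp_mul_eq_mul_exp_of_mul_eq {𝕂 : Type*} [RCLike 𝕂] {A : Matrix m m 𝕂}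
    {B : Matrix n n 𝕂} {P : Matrix m n 𝕂} (h : A * P = P * B) :
    NormedSpace.exp A * P = P * NormedSpace.exp B := by
  have hA := (NormedSpace.exp_series_hasSum_exp' (𝕂 := 𝕂) A).map
    (mulRightLinearMap m 𝕂 P) (continuous_id.matrix_mul continuous_const)
  have hB := (NormedSpace.exp_series_hasSum_exp' (𝕂 := 𝕂) B).map
    (mulLeftLinearMap n 𝕂 P) (continuous_const.matrix_mul continuous_id)
  simp only [Function.comp_def, mulRightLinearMap_apply, mulLeftLinearMap_apply,
    Matrix.smul_mul, Matrix.mul_smul, pow_mul_eq_mul_pow_of_mul_eq h] at hA hB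
  exact hA.unique hB

theorem mul_eq_mul_of_exp_smul_mul_eq {A : Matrix m m ℝ} {B : Matrix n n ℝ} {P : Matrix m n ℝ}
    (h : ∀ t : ℝ, 0 ≤ t → NormedSpace.exp (t • A) * P = P * NormedSpace.exp (t • B)) :
    A * P = P * B := by
  let : NormedAddCommGroup (Matrix m n ℝ) := Matrix.linftyOpNormedAddCommGroup
  let : NormedSpace ℝ (Matrix m n ℝ) := Matrix.linftyOpNormedSpace
  let mulRight : Matrix m m ℝ →L[ℝ] Matrix m n ℝ :=
    ⟨mulRightLinearMap m ℝ P, continuous_id.matrix_mul continuous_const⟩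
  let mulLeft : Matrix n n ℝ →L[ℝ] Matrix m n ℝ :=
    ⟨mulLeftLinearMap n ℝ P, continuous_const.matrix_mul continuous_id⟩
  have hA : HasDerivAt (fun t : ℝ => NormedSpace.exp (t • A) * P) (A * P) 0 := by
    have := mulRight.hasFDerivAt.comp_hasDerivAt (0 : ℝ) (hasDerivAt_exp_smul_const A (0 : ℝ))
    rwa [zero_smul, NormedSpace.exp_zero, one_mul] at this
  have hB : HasDerivAt (fun t : ℝ => P * NormedSpace.exp (t • B)) (P * B) 0 := by
    have := mulLeft.hasFDerivAt.comp_hasDerivAt (0 : ℝ) (hasDerivAt_exp_smul_const' B (0 : ℝ))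
    rwa [zero_smul, NormedSpace.exp_zero, mul_one] at this
  exact (uniqueDiffOn_Ici 0 0 Set.self_mem_Ici).eq_deriv _ hA.hasDerivWithinAt
    (hB.hasDerivWithinAt.congr (fun t ht => h t ht) (h 0 le_rfl))

end Exponential

end Matrix

theorem rate_marginalization_iff_projective_consistency_general
    {S' S : Type*} [Fintype S'] [Fintype S] [DecidableEq S'] [DecidableEq S]
    (π : S' → S)
    (Q' : Matrix S' S' ℝ) (Q : Matrix S S ℝ)
    (hQ'row : ∀ a, ∑ b, Q' a b = 0) (hQrow : ∀ a, ∑ b, Q a b = 0) :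
    (∀ (ζ' : S') (η : S), η ≠ π ζ' →
        Q (π ζ') η = ∑ η' : S', if π η' = η then Q' ζ' η' else 0)
      ↔ (∀ t : ℝ, 0 ≤ t →
          (NormedSpace.exp (t • Q')) * (Matrix.of fun a b => if π a = b then (1:ℝ) else 0)
            = (Matrix.of fun a b => if π a = b then (1:ℝ) else 0) * NormedSpace.exp (t • Q)) := by
  rw [Matrix.forall_ne_apply_eq_sum_iff_mul_graphMatrix_eq π hQ'row hQrow]
  refine ⟨fun h t _ => Matrix.exp_mul_eq_mul_exp_of_mul_eq ?_, Matrix.mul_eq_mul_of_exp_smul_mul_eq⟩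
  rw [Matrix.smul_mul, Matrix.mul_smul]
  exact congrArg (t • ·) h

/-- **Lemma "consistence".** Let `X'` and `X` be Markov jump processes on
finite state spaces `S'` and `S` (here: the spaces `P_{k+1}^s` and `P_k^s` of structured
partitions) with Q-matrices `Q'` and `Q`, and let `π : S' → S` be the projection (deleting
the sample point `k+1`).  Then the rate-marginalization condition
(i): `q(η|ζ) = Σ_{η' : π η' = η} q'(ζ'|η')` for all `ζ'` and all `η ≠ π ζ'`,
is equivalent to the pathwise projective consistency
(ii): the law of the projected process started from any `ζ'` equals the law of the process
started at `π ζ'`; for finite-state jump processes this is exactly the intertwining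
`exp(tQ') · P_π = P_π · exp(tQ)` of the transition semigroups for all `t ≥ 0`, where
`P_π` is the 0-1 matrix of `π`. -/
theorem rate_marginalization_iff_projective_consistency
    {S' S : Type*} [Fintype S'] [Fintype S] [DecidableEq S'] [DecidableEq S]
    (π : S' → S) (hπ : Function.Surjective π)
    (Q' : Matrix S' S' ℝ) (Q : Matrix S S ℝ)
    (hQ'off : ∀ a b, a ≠ b → 0 ≤ Q' a b) (hQ'row : ∀ a, ∑ b, Q' a b = 0)
    (hQoff : ∀ a b, a ≠ b → 0 ≤ Q a b) (hQrow : ∀ a, ∑ b, Q a b = 0) :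
    (∀ (ζ' : S') (η : S), η ≠ π ζ' →
        Q (π ζ') η = ∑ η' : S', if π η' = η then Q' ζ' η' else 0)
      ↔ (∀ t : ℝ, 0 ≤ t →
          (NormedSpace.exp (t • Q')) * (Matrix.of fun a b => if π a = b then (1:ℝ) else 0)
            = (Matrix.of fun a b => if π a = b then (1:ℝ) else 0) * NormedSpace.exp (t • Q)) :=
  rate_marginalization_iff_projective_consistency_general π Q' Q hQ'row hQrow
end
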